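/- Let N ≥ 2 and let T₁, …, T_N be independent random variables, each uniformly distributed on [0,T] with T > 0. For n ∈ ℕ with n ≥ 2, the probability that |T_i - T_j| ≥ T/n for all i ≠ j is at least ∏_{j=1}^{N-1} (1 - 2j/n) (interpreted as 0 if some factor is negative). -/

import Mathlib

open MeasureTheory ProbabilityTheory Finset Metric
open scoped ENNReal

/-!
Place the points one at a time. A ball of radius `T / n` has uniform measure at most `2 / n`, so
a fresh uniform point lands within `T / n` of one of `k` given points with probability at most
`2k / n`; by Fubini, adding it to a `T / n`-separated tuple of `k` points keeps the tuple
separated with probability at least `1 - 2k / n`. Truncated subtraction in `ℝ≥0∞` plays the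
role of `max (·) 0`.
-/

def separatedTuples {ι E : Type*} [PseudoMetricSpace E] (r : ℝ) : Set (ι → E) :=
  {x | Pairwise fun i j => r ≤ dist (x i) (x j)}

section

variable {E : Type*} [PseudoMetricSpace E] {r : ℝ}

theorem cons_mem_separatedTuples_iff {n : ℕ} (a : E) (y : Fin n → E) :
    (Fin.cons a y : Fin (n + 1) → E) ∈ separatedTuples r ↔
      (∀ j, r ≤ dist a (y j)) ∧ y ∈ separatedTuples r := by
  refine ⟨fun h => ⟨fun j => by simpa using h (Fin.succ_ne_zero j).symm,
    fun i j hij => by simpa using h ((Fin.succ_injective n).ne hij)⟩, ?_⟩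
  rintro ⟨ha, hy⟩ i j hij
  cases i using Fin.cases <;> cases j using Fin.cases
  · exact absurd rfl hij
  · simpa using ha _
  · simpa [dist_comm] using ha _
  · exact hy (by simpa using hij)

variable [MeasurableSpace E] {μ : Measure E} [IsProbabilityMeasure μ] {p : ℝ≥0∞}

theorem one_sub_card_mul_le_measure_forall_le_dist {ι : Type*} [Fintype ι]
    (hball : ∀ c, μ (ball c r) ≤ p) (y : ι → E) :
    1 - Fintype.card ι * p ≤ μ {x | ∀ j, r ≤ dist x (y j)} := by
  set A := {x | ∀ j, r ≤ dist x (y j)}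
  have hAc : μ Aᶜ ≤ Fintype.card ι * p := calc
    μ Aᶜ ≤ μ (⋃ j, ball (y j) r) := measure_mono fun x hx => by
      simpa [A, dist_comm] using hx
    _ ≤ ∑ j, μ (ball (y j) r) := measure_iUnion_fintype_le _ _
    _ ≤ ∑ _j : ι, p := Finset.sum_le_sum fun j _ => hball _
    _ = Fintype.card ι * p := by simp
  rw [tsub_le_iff_right]
  calc 1 = μ (A ∪ Aᶜ) := by simp
    _ ≤ μ A + μ Aᶜ := measure_union_le _ _
    _ ≤ μ A + Fintype.card ι * p := by gcongr

theorem measurableSet_separatedTuples {ι : Type*} [Countable ι]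
    [OpensMeasurableSpace E] [SecondCountableTopology E] :
    MeasurableSet (separatedTuples r : Set (ι → E)) := by
  unfold separatedTuples Pairwise
  measurability

theorem prod_one_sub_mul_le_pi_separatedTuples [OpensMeasurableSpace E]
    [SecondCountableTopology E] (hball : ∀ c, μ (ball c r) ≤ p) (N : ℕ) :
    ∏ j ∈ range N, (1 - j * p) ≤ Measure.pi (fun _ : Fin N => μ) (separatedTuples r) := by
  induction N with
  | zero => simp [separatedTuples, Pairwise]
  | succ N ih =>
    set ν := Measure.pi fun _ : Fin N => μ
    set S : Set (E × (Fin N → E)) :=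
      {q | (∀ j, r ≤ dist q.1 (q.2 j)) ∧ q.2 ∈ separatedTuples r}
    have hS : MeasurableSet S :=
      (measurableSet_setOfPred.2 (by fun_prop)).inter (measurable_snd measurableSet_separatedTuples)
    have hpi : Measure.pi (fun _ : Fin (N + 1) => μ) (separatedTuples r) = (μ.prod ν) S := by
      rw [← (measurePreserving_piFinSuccAbove (fun _ => μ) 0).measure_preimage_equiv]
      congr 1
      ext x
      simpa [S] using cons_mem_separatedTuples_iff (r := r) (x 0) (Fin.tail x)
    calc ∏ j ∈ range (N + 1), (1 - j * p)
        = (1 - N * p) * ∏ j ∈ range N, (1 - j * p) := by rw [prod_range_succ, mul_comm]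
      _ ≤ (1 - N * p) * ν (separatedTuples r) := by gcongr
      _ = ∫⁻ _ in separatedTuples r, (1 - N * p) ∂ν := (setLIntegral_const _ _).symm
      _ ≤ ∫⁻ y in separatedTuples r, μ ((·, y) ⁻¹' S) ∂ν :=
          setLIntegral_mono' measurableSet_separatedTuples fun y hy => by
            simpa [S, hy] using one_sub_card_mul_le_measure_forall_le_dist hball y
      _ ≤ ∫⁻ y, μ ((·, y) ⁻¹' S) ∂ν := setLIntegral_le_lintegral _ _
      _ = _ := by rw [hpi, Measure.prod_apply_symm hS]

end

theorem cond_Icc_ball_le {a b : ℝ} (hab : a < b) (c r : ℝ) :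
    volume[|Set.Icc a b] (ball c r) ≤ ENNReal.ofReal (2 * r / (b - a)) := calc
  volume[|Set.Icc a b] (ball c r) ≤ (volume (Set.Icc a b))⁻¹ * volume (ball c r) := by
    rw [cond_apply measurableSet_Icc]
    gcongr
    exact Set.inter_subset_right
  _ = ENNReal.ofReal (2 * r / (b - a)) := by
    rw [Real.volume_Icc, Real.volume_ball, ENNReal.ofReal_div_of_pos (by linarith),
      ENNReal.div_eq_inv_mul]

theorem ENNReal.ofReal_max_one_sub_mul {a : ℝ} (ha : 0 ≤ a) (j : ℕ) :
    ENNReal.ofReal (max (1 - j * a) 0) = 1 - j * ENNReal.ofReal a := by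
  rw [ENNReal.ofReal_max, ENNReal.ofReal_zero, max_eq_left zero_le,
    ENNReal.ofReal_sub _ (by positivity), ENNReal.ofReal_one,
    ENNReal.ofReal_mul (Nat.cast_nonneg j), ENNReal.ofReal_natCast]

theorem ENNReal.ofReal_prod_Icc_max_one_sub_mul {a : ℝ} (ha : 0 ≤ a) (N : ℕ) :
    ENNReal.ofReal (∏ j ∈ Icc 1 (N - 1), max (1 - j * a) 0) =
      ∏ j ∈ range N, (1 - j * ENNReal.ofReal a) := by
  rw [ENNReal.ofReal_prod_of_nonneg fun _ _ => le_max_right _ _]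
  refine (prod_subset (fun j hj => ?_) (fun j hjN hj => ?_)).trans
    (prod_congr rfl fun j _ => ENNReal.ofReal_max_one_sub_mul ha j)
  · simp only [mem_Icc, mem_range] at hj ⊢
    omega
  · obtain rfl : j = 0 := by simp only [mem_Icc, mem_range] at hj hjN; omega
    simp

theorem stmt_9_general {Ω : Type*} [MeasurableSpace Ω] (P : Measure Ω) [IsProbabilityMeasure P]
    (N n : ℕ) (T : ℝ) (hT : 0 < T)
    (X : Fin N → Ω → ℝ) (hmeas : ∀ i, Measurable (X i))
    (hindep : iIndepFun X P)
    (hunif : ∀ i, Measure.map (X i) P =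
      (ENNReal.ofReal T)⁻¹ • volume.restrict (Set.Icc 0 T)) :
    ENNReal.ofReal (∏ j ∈ Finset.Icc 1 (N - 1), max (1 - 2 * (j : ℝ) / n) 0) ≤
      P {ω | ∀ i j : Fin N, i ≠ j → T / n ≤ |X i ω - X j ω|} := by
  have hcond : (ENNReal.ofReal T)⁻¹ • volume.restrict (Set.Icc 0 T) = volume[|Set.Icc 0 T] := by
    rw [ProbabilityTheory.cond, Real.volume_Icc, sub_zero]
  have hlaw : P.map (fun ω i => X i ω) = Measure.pi fun _ => volume[|Set.Icc 0 T] := by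
    rw [(iIndepFun_iff_map_fun_eq_pi_map fun i => (hmeas i).aemeasurable).1 hindep]
    simp_rw [hunif, hcond]
  have : IsProbabilityMeasure volume[|Set.Icc 0 T] :=
    cond_isProbabilityMeasure_of_finite (by simp [hT]) (by simp)
  have hball (c : ℝ) : volume[|Set.Icc 0 T] (ball c (T / n)) ≤ ENNReal.ofReal (2 / n) := by
    refine (cond_Icc_ball_le hT c (T / n)).trans_eq ?_
    rw [sub_zero, mul_div_assoc, div_div_cancel_left' hT.ne', div_eq_mul_inv]
  have hprod : ENNReal.ofReal (∏ j ∈ Finset.Icc 1 (N - 1), max (1 - 2 * (j : ℝ) / n) 0) =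
      ∏ j ∈ range N, (1 - j * ENNReal.ofReal (2 / n)) := by
    have h2j (j : ℕ) : 2 * (j : ℝ) / n = j * (2 / n) := by ring
    simp_rw [h2j]
    exact ENNReal.ofReal_prod_Icc_max_one_sub_mul (by positivity) N
  have hevent : {ω | ∀ i j : Fin N, i ≠ j → T / n ≤ |X i ω - X j ω|} =
      (fun ω i => X i ω) ⁻¹' separatedTuples (T / n) := by
    ext; simp [separatedTuples, Pairwise, Real.dist_eq]
  rw [hevent, ← Measure.map_apply (measurable_pi_lambda _ hmeas) measurableSet_separatedTuples,
    hlaw, hprod]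
  exact prod_one_sub_mul_le_pi_separatedTuples hball N

theorem stmt_9 {Ω : Type*} [MeasurableSpace Ω] (P : Measure Ω) [IsProbabilityMeasure P]
    (N n : ℕ) (hN : 2 ≤ N) (hn : 2 ≤ n) (T : ℝ) (hT : 0 < T)
    (X : Fin N → Ω → ℝ) (hmeas : ∀ i, Measurable (X i))
    (hindep : iIndepFun X P)
    (hunif : ∀ i, Measure.map (X i) P =
      (ENNReal.ofReal T)⁻¹ • volume.restrict (Set.Icc 0 T)) :
    ENNReal.ofReal (∏ j ∈ Finset.Icc 1 (N - 1), max (1 - 2 * (j : ℝ) / n) 0) ≤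
      P {ω | ∀ i j : Fin N, i ≠ j → T / n ≤ |X i ω - X j ω|} :=
  stmt_9_general P N n T hT X hmeas hindep hunif
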